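/- arXiv:1805.10217 — 5 statements merged into one kernel-verified Lean document; each statement's English description precedes it below -/
import Mathlib

section
/- Fix y ∈ ℝ² and a unit vector t ∈ ℝ². For x ≠ y let V(y,t,x) = 2⟨x−y, t⟩/|x−y|²·(x−y) − t, and consider the 1-form α = V₁ dx¹ + V₂ dx². Then on ℝ² ∖ {y}, dα = 2·det(y−x, t)/|x−y|² dx¹∧dx² (i.e., ∂V₂/∂x¹ − ∂V₁/∂x² = 2·det(y−x,t)/|x−y|²). -/
/-- Fix `y ∈ ℝ²` and a unit vector `t`.  For `x ≠ y` let
`V(y,t,x) = 2⟨x−y,t⟩/‖x−y‖² • (x−y) − t` and `α = V₁ dx¹ + V₂ dx²`.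
Then `dα = (∂V₂/∂x¹ − ∂V₁/∂x²) dx¹∧dx² = 2 det(y−x,t)/‖x−y‖² dx¹∧dx²`. -/
theorem stmt1 (y t : ℝ × ℝ) (ht : t.1 ^ 2 + t.2 ^ 2 = 1) (x : ℝ × ℝ) (hxy : x ≠ y) :
    let V₁ : ℝ × ℝ → ℝ := fun p =>
      2 * ((p.1 - y.1) * t.1 + (p.2 - y.2) * t.2) / ((p.1 - y.1) ^ 2 + (p.2 - y.2) ^ 2)
        * (p.1 - y.1) - t.1
    let V₂ : ℝ × ℝ → ℝ := fun p =>
      2 * ((p.1 - y.1) * t.1 + (p.2 - y.2) * t.2) / ((p.1 - y.1) ^ 2 + (p.2 - y.2) ^ 2)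
        * (p.2 - y.2) - t.2
    deriv (fun s => V₂ (s, x.2)) x.1 - deriv (fun s => V₁ (x.1, s)) x.2
      = 2 * ((y.1 - x.1) * t.2 - (y.2 - x.2) * t.1) / ((x.1 - y.1) ^ 2 + (x.2 - y.2) ^ 2) := by
  intro V₁ V₂
  set a := x.1 - y.1 with ha
  set b := x.2 - y.2 with hb
  have hd : a ^ 2 + b ^ 2 ≠ 0 := by
    intro h
    apply hxy
    have h1 : a = 0 := by nlinarith [sq_nonneg a, sq_nonneg b]
    have h2 : b = 0 := by nlinarith [sq_nonneg a, sq_nonneg b]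
    exact Prod.ext (by rw [ha] at h1; linarith) (by rw [hb] at h2; linarith)
  -- derivative of V₂ in first variable
  have hf2 : HasDerivAt (fun s : ℝ => 2 * ((s - y.1) * t.1 + b * t.2)) (2 * (1 * t.1)) x.1 := by
    exact ((((hasDerivAt_id x.1).sub_const y.1).mul_const t.1).add_const (b * t.2)).const_mul 2
  have hg2 : HasDerivAt (fun s : ℝ => (s - y.1) ^ 2 + b ^ 2)
      (2 * (x.1 - y.1) ^ 1 * 1) x.1 := by
    exact (((hasDerivAt_id x.1).sub_const y.1).pow 2).add_const (b ^ 2)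
  have h2 : HasDerivAt (fun s => V₂ (s, x.2))
      ((2 * (1 * t.1) * ((x.1 - y.1) ^ 2 + b ^ 2)
        - 2 * ((x.1 - y.1) * t.1 + b * t.2) * (2 * (x.1 - y.1) ^ 1 * 1))
        / ((x.1 - y.1) ^ 2 + b ^ 2) ^ 2 * b) x.1 := by
    exact (((hf2.div hg2 (by rw [← ha]; exact hd)).mul_const b).sub_const t.2)
  -- derivative of V₁ in second variable
  have hf1 : HasDerivAt (fun s : ℝ => 2 * (a * t.1 + (s - y.2) * t.2)) (2 * (1 * t.2)) x.2 := by
    exact ((((hasDerivAt_id x.2).sub_const y.2).mul_const t.2).const_add (a * t.1)).const_mul 2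
  have hg1 : HasDerivAt (fun s : ℝ => a ^ 2 + (s - y.2) ^ 2)
      (2 * (x.2 - y.2) ^ 1 * 1) x.2 := by
    exact ((((hasDerivAt_id x.2).sub_const y.2).pow 2)).const_add (a ^ 2)
  have h1 : HasDerivAt (fun s => V₁ (x.1, s))
      ((2 * (1 * t.2) * (a ^ 2 + (x.2 - y.2) ^ 2)
        - 2 * (a * t.1 + (x.2 - y.2) * t.2) * (2 * (x.2 - y.2) ^ 1 * 1))
        / (a ^ 2 + (x.2 - y.2) ^ 2) ^ 2 * a) x.2 := by
    exact (((hf1.div hg1 (by rw [← hb]; exact hd)).mul_const a).sub_const t.1)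
  rw [h2.deriv, h1.deriv, ← ha, ← hb]
  have hd2 : (a ^ 2 + b ^ 2) ^ 2 ≠ 0 := pow_ne_zero _ hd
  field_simp
  ring
end

section
/- With L, H, q̂ as in the Legendre transform setup, a C² function f : (a,b) → ℝ satisfies the Euler–Lagrange equation d/dt[∂L/∂q̇(t,f,f')] = ∂L/∂q(t,f,f') if and only if the pair (f, g), with g(t) = ∂L/∂q̇(t,f(t),f'(t)), satisfies Hamilton's equations f' = ∂H/∂p(t,f,g), g' = −∂H/∂q(t,f,g). -/
/-!
Along the curve, `g = ∂L/∂q̇(t,f,f')` means `q̂(t,f,g) = f'`, so everything reduces to the two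
formulas `∂H/∂p = q̂` and `∂H/∂q = -∂L/∂q(t,q,q̂)`. Since `∂L/∂q̇` is increasing, `L(t,q,·)` is
convex and `H(t,q,p) = max_w (p w - L(t,q,w))`, attained at `w = q̂(t,q,p)`; as the inverse of a
continuous family of strictly increasing functions, `q̂` is continuous. The envelope theorem then
gives both formulas without differentiating `q̂`. With them, Hamilton's first equation holds
identically and the second one is the Euler–Lagrange equation.
-/

open Set Filter Topology Function

theorem mul_sub_le_mul_sub_of_deriv_eq {ℓ : ℝ → ℝ} (hℓ : Differentiable ℝ ℓ)
    (hmono : Monotone (deriv ℓ)) {p v : ℝ} (hv : deriv ℓ v = p) (w : ℝ) :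
    p * w - ℓ w ≤ p * v - ℓ v := by
  have hφ : ∀ x, HasDerivAt (fun w => ℓ w - p * w) (deriv ℓ x - p) x := fun x =>
    ((hℓ x).hasDerivAt.sub ((hasDerivAt_id' x).const_mul p)).congr_deriv (by ring)
  have hmin : IsMinOn (fun w => ℓ w - p * w) univ v :=
    isMinOn_univ_of_deriv (hφ v).continuousAt
      (fun x _ => (hφ x).differentiableAt.differentiableWithinAt)
      (fun x _ => (hφ x).differentiableAt.differentiableWithinAt)
      (fun x hx => by rw [(hφ x).deriv, sub_nonpos, ← hv]; exact hmono (le_of_lt hx))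
      (fun x hx => by rw [(hφ x).deriv, sub_nonneg, ← hv]; exact hmono (le_of_lt hx))
  have := hmin (mem_univ w)
  simp only [mem_ofPred_eq] at this
  linarith

theorem continuous_of_strictMono_of_apply_eq {X : Type*} [TopologicalSpace X] {D : X → ℝ → ℝ}
    (hD : Continuous (uncurry D)) (hmono : ∀ x, StrictMono (D x)) {y v : X → ℝ}
    (hy : Continuous y) (hv : ∀ x, D x (v x) = y x) : Continuous v := by
  have hDc (u : ℝ) : Continuous fun x => D x u := hD.comp (continuous_id.prodMk continuous_const)
  refine continuous_iff_continuousAt.2 fun x₀ => tendsto_order.2 ⟨fun l hl => ?_, fun u hu => ?_⟩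
  · have hlt : D x₀ l < y x₀ := hv x₀ ▸ hmono x₀ hl
    filter_upwards [(hDc l).continuousAt.eventually_lt hy.continuousAt hlt] with x hx
    exact (hmono x).lt_iff_lt.1 (hv x ▸ hx)
  · have hlt : y x₀ < D x₀ u := hv x₀ ▸ hmono x₀ hu
    filter_upwards [hy.continuousAt.eventually_lt (hDc u).continuousAt hlt] with x hx
    exact (hmono x).lt_iff_lt.1 (hv x ▸ hx)

section Envelope

variable {G G' : ℝ → ℝ → ℝ}

theorem eventually_abs_sub_sub_mul_le (hG : ∀ x w, HasDerivAt (fun x => G x w) (G' x w) x)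
    {x₀ w₀ c : ℝ} (hG' : ContinuousAt (uncurry G') (x₀, w₀)) (hc : 0 < c) :
    ∀ᶠ z : ℝ × ℝ in 𝓝 (x₀, w₀),
      |G z.1 z.2 - G x₀ z.2 - G' x₀ w₀ * (z.1 - x₀)| ≤ c * |z.1 - x₀| := by
  obtain ⟨δ, hδ, hclose⟩ := Metric.continuousAt_iff.1 hG' c hc
  filter_upwards [Metric.ball_mem_nhds _ hδ] with ⟨x, w⟩ hxw
  rw [Metric.mem_ball, Prod.dist_eq, max_lt_iff] at hxw
  have hderiv : ∀ y ∈ Metric.ball x₀ δ, HasDerivWithinAt (fun y => G y w - G' x₀ w₀ * y)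
      (G' y w - G' x₀ w₀) (Metric.ball x₀ δ) y := fun y _ =>
    ((hG y w).sub ((hasDerivAt_id y).const_mul _ |>.congr_deriv (mul_one _))).hasDerivWithinAt
  have hbound : ∀ y ∈ Metric.ball x₀ δ, ‖G' y w - G' x₀ w₀‖ ≤ c := fun y hy => by
    have := hclose (show dist (y, w) (x₀, w₀) < δ by
      rw [Prod.dist_eq, max_lt_iff]; exact ⟨hy, hxw.2⟩)
    exact (Real.dist_eq _ _ ▸ this).le
  have := (convex_ball x₀ δ).norm_image_sub_le_of_norm_hasDerivWithin_le hderiv hbound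
    (Metric.mem_ball_self hδ) hxw.1
  simp only [Real.norm_eq_abs] at this
  convert this using 2
  ring

/-- The envelope theorem. -/
theorem hasDerivAt_apply_of_forall_le (hG : ∀ x w, HasDerivAt (fun x => G x w) (G' x w) x)
    {v : ℝ → ℝ} (hmax : ∀ x w, G x w ≤ G x (v x)) {x₀ : ℝ} (hv : ContinuousAt v x₀)
    (hG' : ContinuousAt (uncurry G') (x₀, v x₀)) :
    HasDerivAt (fun x => G x (v x)) (G' x₀ (v x₀)) x₀ := by
  rw [hasDerivAt_iff_isLittleO, Asymptotics.isLittleO_iff]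
  intro c hc
  have hnear := eventually_abs_sub_sub_mul_le hG hG' hc
  have hcurve : Tendsto (fun x => (x, v x)) (𝓝 x₀) (𝓝 (x₀, v x₀)) := tendsto_id.prodMk_nhds hv
  have hline : Tendsto (fun x => (x, v x₀)) (𝓝 x₀) (𝓝 (x₀, v x₀)) :=
    tendsto_id.prodMk_nhds tendsto_const_nhds
  filter_upwards [hcurve.eventually hnear, hline.eventually hnear] with x hcx hlx
  have hlower := hmax x (v x₀)
  have hupper := hmax x₀ (v x)
  rw [abs_le] at hcx hlx
  rw [Real.norm_eq_abs, Real.norm_eq_abs, smul_eq_mul, abs_le]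
  constructor <;> linarith

end Envelope

section Lagrangian

variable {L : ℝ → ℝ → ℝ → ℝ}

theorem hasDerivAt_velocity (hL : Differentiable ℝ fun x : ℝ × ℝ × ℝ => L x.1 x.2.1 x.2.2)
    (t q v : ℝ) :
    HasDerivAt (L t q)
      (fderiv ℝ (fun x : ℝ × ℝ × ℝ => L x.1 x.2.1 x.2.2) (t, q, v) (0, 0, 1)) v := by
  have hline : HasDerivAt (fun w : ℝ => ((t, q, w) : ℝ × ℝ × ℝ)) (0, 0, 1) v :=
    (hasDerivAt_const v t).prodMk ((hasDerivAt_const v q).prodMk (hasDerivAt_id v))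
  exact (hL (t, q, v)).hasFDerivAt.comp_hasDerivAt v hline

theorem hasDerivAt_position (hL : Differentiable ℝ fun x : ℝ × ℝ × ℝ => L x.1 x.2.1 x.2.2)
    (t q v : ℝ) :
    HasDerivAt (fun q => L t q v)
      (fderiv ℝ (fun x : ℝ × ℝ × ℝ => L x.1 x.2.1 x.2.2) (t, q, v) (0, 1, 0)) q := by
  have hline : HasDerivAt (fun w : ℝ => ((t, w, v) : ℝ × ℝ × ℝ)) (0, 1, 0) q :=
    (hasDerivAt_const q t).prodMk ((hasDerivAt_id q).prodMk (hasDerivAt_const q v))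
  exact (hL (t, q, v)).hasFDerivAt.comp_hasDerivAt q hline

theorem continuous_deriv_velocity (hL : ContDiff ℝ 1 fun x : ℝ × ℝ × ℝ => L x.1 x.2.1 x.2.2) :
    Continuous fun x : ℝ × ℝ × ℝ => deriv (L x.1 x.2.1) x.2.2 :=
  ((hL.continuous_fderiv one_ne_zero).clm_apply continuous_const).congr fun x =>
    (hasDerivAt_velocity (hL.differentiable one_ne_zero) x.1 x.2.1 x.2.2).deriv.symm

theorem continuous_deriv_position (hL : ContDiff ℝ 1 fun x : ℝ × ℝ × ℝ => L x.1 x.2.1 x.2.2) :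
    Continuous fun x : ℝ × ℝ × ℝ => deriv (fun q => L x.1 q x.2.2) x.2.1 :=
  ((hL.continuous_fderiv one_ne_zero).clm_apply continuous_const).congr fun x =>
    (hasDerivAt_position (hL.differentiable one_ne_zero) x.1 x.2.1 x.2.2).deriv.symm

end Lagrangian

section Legendre

variable {L qhat H : ℝ → ℝ → ℝ → ℝ}

theorem mul_sub_le_mul_qhat_sub
    (hL : Differentiable ℝ fun x : ℝ × ℝ × ℝ => L x.1 x.2.1 x.2.2)
    (hLeg : ∀ t q v, 0 < deriv (deriv (L t q)) v)
    (hqhat : ∀ t q p, deriv (L t q) (qhat t q p) = p) (t q p w : ℝ) :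
    p * w - L t q w ≤ p * qhat t q p - L t q (qhat t q p) :=
  mul_sub_le_mul_sub_of_deriv_eq (fun v => (hasDerivAt_velocity hL t q v).differentiableAt)
    (strictMono_of_deriv_pos (hLeg t q)).monotone (hqhat t q p) w

theorem continuous_qhat (hL : ContDiff ℝ 1 fun x : ℝ × ℝ × ℝ => L x.1 x.2.1 x.2.2)
    (hLeg : ∀ t q v, 0 < deriv (deriv (L t q)) v)
    (hqhat : ∀ t q p, deriv (L t q) (qhat t q p) = p) :
    Continuous fun x : ℝ × ℝ × ℝ => qhat x.1 x.2.1 x.2.2 :=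
  continuous_of_strictMono_of_apply_eq (D := fun (x : ℝ × ℝ × ℝ) w => deriv (L x.1 x.2.1) w)
    ((continuous_deriv_velocity hL).comp
      (by fun_prop : Continuous fun z : (ℝ × ℝ × ℝ) × ℝ => (z.1.1, z.1.2.1, z.2)))
    (fun x => strictMono_of_deriv_pos (hLeg x.1 x.2.1)) (by fun_prop) (fun x => hqhat _ _ _)

theorem hasDerivAt_hamiltonian_momentum
    (hL : ContDiff ℝ 1 fun x : ℝ × ℝ × ℝ => L x.1 x.2.1 x.2.2)
    (hLeg : ∀ t q v, 0 < deriv (deriv (L t q)) v)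
    (hqhat : ∀ t q p, deriv (L t q) (qhat t q p) = p)
    (hH : ∀ t q p, H t q p = p * qhat t q p - L t q (qhat t q p)) (t q p : ℝ) :
    HasDerivAt (fun p => H t q p) (qhat t q p) p := by
  have hqhat_cont : Continuous fun p => qhat t q p :=
    (continuous_qhat hL hLeg hqhat).comp (by fun_prop : Continuous fun p : ℝ => (t, q, p))
  simp only [hH]
  exact hasDerivAt_apply_of_forall_le (G := fun p w => p * w - L t q w) (G' := fun _ w => w)
    (fun p w => (hasDerivAt_mul_const w).sub_const _)
    (mul_sub_le_mul_qhat_sub (hL.differentiable one_ne_zero) hLeg hqhat t q)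
    hqhat_cont.continuousAt continuous_snd.continuousAt

theorem hasDerivAt_hamiltonian_position
    (hL : ContDiff ℝ 1 fun x : ℝ × ℝ × ℝ => L x.1 x.2.1 x.2.2)
    (hLeg : ∀ t q v, 0 < deriv (deriv (L t q)) v)
    (hqhat : ∀ t q p, deriv (L t q) (qhat t q p) = p)
    (hH : ∀ t q p, H t q p = p * qhat t q p - L t q (qhat t q p)) (t q p : ℝ) :
    HasDerivAt (fun q => H t q p) (-deriv (fun q' => L t q' (qhat t q p)) q) q := by
  have hqhat_cont : Continuous fun q => qhat t q p :=
    (continuous_qhat hL hLeg hqhat).comp (by fun_prop : Continuous fun q : ℝ => (t, q, p))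
  have hLq_cont : Continuous fun z : ℝ × ℝ => -deriv (fun q' => L t q' z.2) z.1 :=
    ((continuous_deriv_position hL).comp
      (by fun_prop : Continuous fun z : ℝ × ℝ => (t, z.1, z.2))).neg
  have hLq (q w : ℝ) : HasDerivAt (fun q => L t q w) (deriv (fun q' => L t q' w) q) q :=
    (hasDerivAt_position (hL.differentiable one_ne_zero) t q w).differentiableAt.hasDerivAt
  simp only [hH]
  exact hasDerivAt_apply_of_forall_le (G := fun q w => p * w - L t q w)
    (G' := fun q w => -deriv (fun q' => L t q' w) q) (fun q w => (hLq q w).const_sub _)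
    (fun q => mul_sub_le_mul_qhat_sub (hL.differentiable one_ne_zero) hLeg hqhat t q p)
    hqhat_cont.continuousAt hLq_cont.continuousAt

end Legendre

theorem stmt10_general (a b : ℝ) (L : ℝ → ℝ → ℝ → ℝ)
    (hL : ContDiff ℝ 2 (fun p : ℝ × ℝ × ℝ => L p.1 p.2.1 p.2.2))
    (hLeg : ∀ t q v : ℝ, 0 < deriv (deriv (L t q)) v)
    (qhat : ℝ → ℝ → ℝ → ℝ)
    (hqhat : ∀ t q p : ℝ, deriv (L t q) (qhat t q p) = p)
    (huniq : ∀ t q p v : ℝ, deriv (L t q) v = p → v = qhat t q p)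
    (H : ℝ → ℝ → ℝ → ℝ)
    (hH : ∀ t q p : ℝ, H t q p = p * qhat t q p - L t q (qhat t q p))
    (f : ℝ → ℝ)
    (g : ℝ → ℝ) (hg : ∀ t, g t = deriv (L t (f t)) (deriv f t)) :
    (∀ t ∈ Set.Ioo a b,
        deriv (fun s => deriv (L s (f s)) (deriv f s)) t
          = deriv (fun q' => L t q' (deriv f t)) (f t))
      ↔ (∀ t ∈ Set.Ioo a b,
          deriv f t = deriv (fun p => H t (f t) p) (g t) ∧
          deriv g t = -deriv (fun q' => H t q' (g t)) (f t)) := by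
  have hL₁ := hL.of_le (by norm_num : (1 : WithTop ℕ∞) ≤ 2)
  have hvel (t : ℝ) : qhat t (f t) (g t) = deriv f t := (huniq _ _ _ _ (hg t).symm).symm
  have hHp (t : ℝ) : deriv (fun p => H t (f t) p) (g t) = deriv f t := by
    rw [(hasDerivAt_hamiltonian_momentum hL₁ hLeg hqhat hH t (f t) (g t)).deriv, hvel]
  have hHq (t : ℝ) :
      deriv (fun q' => H t q' (g t)) (f t) = -deriv (fun q' => L t q' (deriv f t)) (f t) := by
    rw [(hasDerivAt_hamiltonian_position hL₁ hLeg hqhat hH t (f t) (g t)).deriv, hvel]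
  have hgfun : (fun s => deriv (L s (f s)) (deriv f s)) = g := (funext hg).symm
  simp only [hHp, hHq, neg_neg, hgfun, true_and]

/-- Equivalence of the Euler–Lagrange equation and Hamilton's equations under
the Legendre transform: with `L` C², `∂²L/∂q̇² > 0`, `q̂` the inverse of the
fiber derivative `p = ∂L/∂q̇(t,q,·)` and `H(t,q,p) = p·q̂ − L(t,q,q̂)`, a C²
function `f` satisfies `d/dt[∂L/∂q̇(t,f,f')] = ∂L/∂q(t,f,f')` on `(a,b)` iff
the pair `(f,g)`, `g(t) = ∂L/∂q̇(t,f(t),f'(t))`, satisfies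
`f' = ∂H/∂p(t,f,g)` and `g' = −∂H/∂q(t,f,g)` on `(a,b)`. -/
theorem stmt10 (a b : ℝ) (hab : a < b) (L : ℝ → ℝ → ℝ → ℝ)
    (hL : ContDiff ℝ 2 (fun p : ℝ × ℝ × ℝ => L p.1 p.2.1 p.2.2))
    (hLeg : ∀ t q v : ℝ, 0 < deriv (deriv (L t q)) v)
    (qhat : ℝ → ℝ → ℝ → ℝ)
    (hqhat : ∀ t q p : ℝ, deriv (L t q) (qhat t q p) = p)
    (huniq : ∀ t q p v : ℝ, deriv (L t q) v = p → v = qhat t q p)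
    (H : ℝ → ℝ → ℝ → ℝ)
    (hH : ∀ t q p : ℝ, H t q p = p * qhat t q p - L t q (qhat t q p))
    (f : ℝ → ℝ) (hf : ContDiff ℝ 2 f)
    (g : ℝ → ℝ) (hg : ∀ t, g t = deriv (L t (f t)) (deriv f t)) :
    (∀ t ∈ Set.Ioo a b,
        deriv (fun s => deriv (L s (f s)) (deriv f s)) t
          = deriv (fun q' => L t q' (deriv f t)) (f t))
      ↔ (∀ t ∈ Set.Ioo a b,
          deriv f t = deriv (fun p => H t (f t) p) (g t) ∧
          deriv g t = -deriv (fun q' => H t q' (g t)) (f t)) :=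
  stmt10_general a b L hL hLeg qhat hqhat huniq H hH f g hg
end

section
/- Let C ⊂ ℝ² be a circle of radius r centered at c, parametrized counterclockwise by arclength, with unit tangents t_x at x and t_y at y. Let α be the biform with matrix 2zzᵀ/|z|² − I, z = x−y. Then for any two distinct points x, y on C, α evaluated on (t_x, t_y), i.e., t_xᵀ(2zzᵀ/|z|² − I)t_y, equals 1. -/
open Real

/-! With `x = c + r(cos θ, sin θ)`, `y = c + r(cos φ, sin φ)` and `δ = θ - φ`, the chord
`z = x - y` satisfies `⟪z, t_x⟫ = ⟪z, t_y⟫ = r sin δ` and `‖z‖² = 2r²(1 - cos δ)`, while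
`⟪t_x, t_y⟫ = cos δ`. The biform is therefore `sin² δ / (1 - cos δ) - cos δ = 1`. -/

lemma chord_inner_tangent_left (r θ φ : ℝ) :
    r * (cos θ - cos φ) * -sin θ + r * (sin θ - sin φ) * cos θ = r * sin (θ - φ) := by
  rw [sin_sub]; ring

lemma chord_inner_tangent_right (r θ φ : ℝ) :
    r * (cos θ - cos φ) * -sin φ + r * (sin θ - sin φ) * cos φ = r * sin (θ - φ) := by
  rw [sin_sub]; ring

lemma chord_norm_sq (r θ φ : ℝ) :
    (r * (cos θ - cos φ)) ^ 2 + (r * (sin θ - sin φ)) ^ 2 = 2 * r ^ 2 * (1 - cos (θ - φ)) := by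
  rw [cos_sub]
  linear_combination r ^ 2 * (sin_sq_add_cos_sq θ + sin_sq_add_cos_sq φ)

lemma tangent_inner_tangent (θ φ : ℝ) : -sin θ * -sin φ + cos θ * cos φ = cos (θ - φ) := by
  rw [cos_sub]; ring

lemma chord_reflection_biform_tangent_eq_one (r θ φ : ℝ)
    (hz : (r * (cos θ - cos φ)) ^ 2 + (r * (sin θ - sin φ)) ^ 2 ≠ 0) :
    2 * (r * (cos θ - cos φ) * -sin θ + r * (sin θ - sin φ) * cos θ)
        * (r * (cos θ - cos φ) * -sin φ + r * (sin θ - sin φ) * cos φ)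
        / ((r * (cos θ - cos φ)) ^ 2 + (r * (sin θ - sin φ)) ^ 2)
      - (-sin θ * -sin φ + cos θ * cos φ) = 1 := by
  rw [chord_norm_sq] at hz ⊢
  rw [chord_inner_tangent_left, chord_inner_tangent_right, tangent_inner_tangent,
    div_sub' hz, div_eq_one_iff_eq hz]
  linear_combination 2 * r ^ 2 * sin_sq_add_cos_sq (θ - φ)

lemma sq_sub_fst_add_sq_sub_snd_ne_zero {p q : ℝ × ℝ} (h : p ≠ q) :
    (p.1 - q.1) ^ 2 + (p.2 - q.2) ^ 2 ≠ 0 := by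
  rw [Ne, add_eq_zero_iff_of_nonneg (sq_nonneg _) (sq_nonneg _), sq_eq_zero_iff, sq_eq_zero_iff,
    sub_eq_zero, sub_eq_zero, ← Prod.ext_iff]
  exact h

theorem stmt15_general (c : ℝ × ℝ) (r : ℝ) (θ φ : ℝ)
    (x y : ℝ × ℝ)
    (hx : x = (c.1 + r * cos θ, c.2 + r * sin θ))
    (hy : y = (c.1 + r * cos φ, c.2 + r * sin φ))
    (hxy : x ≠ y) :
    let tx : ℝ × ℝ := (-sin θ, cos θ)
    let ty : ℝ × ℝ := (-sin φ, cos φ)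
    let z : ℝ × ℝ := (x.1 - y.1, x.2 - y.2)
    2 * (z.1 * tx.1 + z.2 * tx.2) * (z.1 * ty.1 + z.2 * ty.2) / (z.1 ^ 2 + z.2 ^ 2)
      - (tx.1 * ty.1 + tx.2 * ty.2) = 1 := by
  intro tx ty z
  have hz1 : x.1 - y.1 = r * (cos θ - cos φ) := by rw [hx, hy]; ring
  have hz2 : x.2 - y.2 = r * (sin θ - sin φ) := by rw [hx, hy]; ring
  have hz := sq_sub_fst_add_sq_sub_snd_ne_zero hxy
  rw [hz1, hz2] at hz
  simp only [tx, ty, z, hz1, hz2]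
  exact chord_reflection_biform_tangent_eq_one r θ φ hz

/-- Let `C ⊂ ℝ²` be the circle of radius `r > 0` centered at `c`, traversed
counterclockwise, with unit tangent `t_x = (−sin θ, cos θ)` at the point
`x = c + r(cos θ, sin θ)`.  For any two distinct points `x, y` on `C`, the
biform with matrix `2zzᵀ/‖z‖² − I`, `z = x − y`, evaluated on `(t_x, t_y)`
equals `1`:  `t_xᵀ(2zzᵀ/‖z‖² − I)t_y = 1`. -/
theorem stmt15 (c : ℝ × ℝ) (r : ℝ) (hr : 0 < r) (θ φ : ℝ)
    (x y : ℝ × ℝ)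
    (hx : x = (c.1 + r * cos θ, c.2 + r * sin θ))
    (hy : y = (c.1 + r * cos φ, c.2 + r * sin φ))
    (hxy : x ≠ y) :
    let tx : ℝ × ℝ := (-sin θ, cos θ)
    let ty : ℝ × ℝ := (-sin φ, cos φ)
    let z : ℝ × ℝ := (x.1 - y.1, x.2 - y.2)
    2 * (z.1 * tx.1 + z.2 * tx.2) * (z.1 * ty.1 + z.2 * ty.2) / (z.1 ^ 2 + z.2 ^ 2)
      - (tx.1 * ty.1 + tx.2 * ty.2) = 1 :=
  stmt15_general c r θ φ x y hx hy hxy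
end

section
/- Let z = x − y ∈ ℝ² ∖ {0} and α_{ij}(x,y) the entries of 2zzᵀ/|z|² − I. Then away from the diagonal x = y, the double curl vanishes: ∂²α₁₁/∂x²∂y² − ∂²α₁₂/∂x²∂y¹ − ∂²α₂₁/∂x¹∂y² + ∂²α₂₂/∂x¹∂y¹ = 0, i.e., d₁d₂α = 0 on {x ≠ y}. -/
/-!
Every entry `α i j x y` is a function of `z = x - y = (a, b)`, so each mixed derivative
`∂ₓ∂_y` is minus a second derivative in `z` of `g = cos 2θ = (a² - b²)/(a² + b²)` or
`h = sin 2θ = 2ab/(a² + b²)`. The double curl becomes `g_aa - g_bb + 2 h_ab` for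
`g + i h = z / z̄`, i.e. the real part of `4 ∂_z² (z / z̄)`, which vanishes because `z / z̄` is
linear in `z`. Concretely, the four second derivatives cancel over the common denominator `|z|⁶`.
-/

open Topology

/-- For `(a, b) = r (cos θ, sin θ)` these are `cos 2θ` and `sin 2θ`, the entries of the
reflection `2zzᵀ/|z|² - I`. -/
noncomputable def cosTwoArg (a b : ℝ) : ℝ := (a ^ 2 - b ^ 2) / (a ^ 2 + b ^ 2)

noncomputable def sinTwoArg (a b : ℝ) : ℝ := 2 * a * b / (a ^ 2 + b ^ 2)

lemma deriv_deriv_comp_sub (f : ℝ → ℝ) (x y : ℝ) :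
    deriv (fun s => deriv (fun u => f (s - u)) y) x = -deriv (deriv f) (x - y) := by
  simp only [deriv_comp_const_sub]
  exact (deriv.neg (f := fun s => deriv f (s - y))).trans
    (congrArg Neg.neg (deriv_comp_sub_const _ _ _))

lemma deriv_deriv_comp_sub_sub (f : ℝ → ℝ → ℝ) (x₁ y₁ x₂ y₂ : ℝ) :
    deriv (fun s => deriv (fun u => f (x₁ - u) (s - y₂)) y₁) x₂
      = -deriv (fun b => deriv (f · b) (x₁ - y₁)) (x₂ - y₂) := by
  simp only [fun s => deriv_comp_const_sub (f · (s - y₂)) x₁ y₁]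
  exact (deriv.neg (f := fun s => deriv (f · (s - y₂)) (x₁ - y₁))).trans
    (congrArg Neg.neg (deriv_comp_sub_const (fun b => deriv (f · b) (x₁ - y₁)) _ _))

lemma eventually_sq_add_sq_ne_zero {p q : ℝ} (h : p ^ 2 + q ^ 2 ≠ 0) :
    ∀ᶠ t in 𝓝 q, p ^ 2 + t ^ 2 ≠ 0 :=
  (continuous_const.add (continuous_pow 2)).continuousAt.eventually_ne h

lemma hasDerivAt_cosTwoArg (p t : ℝ) (h : p ^ 2 + t ^ 2 ≠ 0) :
    HasDerivAt (cosTwoArg p) (-4 * p ^ 2 * t / (p ^ 2 + t ^ 2) ^ 2) t := by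
  refine (((hasDerivAt_pow 2 t).const_sub (p ^ 2)).fun_div
    ((hasDerivAt_pow 2 t).const_add (p ^ 2)) h).congr_deriv ?_
  field_simp
  ring

lemma deriv_deriv_cosTwoArg (p q : ℝ) (h : p ^ 2 + q ^ 2 ≠ 0) :
    deriv (deriv (cosTwoArg p)) q = -4 * p ^ 2 * (p ^ 2 - 3 * q ^ 2) / (p ^ 2 + q ^ 2) ^ 3 := by
  have hderiv : deriv (cosTwoArg p) =ᶠ[𝓝 q] fun t => -4 * p ^ 2 * t / (p ^ 2 + t ^ 2) ^ 2 :=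
    (eventually_sq_add_sq_ne_zero h).mono fun t ht => (hasDerivAt_cosTwoArg p t ht).deriv
  have hderiv₂ : HasDerivAt (fun t => -4 * p ^ 2 * t / (p ^ 2 + t ^ 2) ^ 2)
      (-4 * p ^ 2 * (p ^ 2 - 3 * q ^ 2) / (p ^ 2 + q ^ 2) ^ 3) q := by
    refine (((hasDerivAt_id' q).const_mul (-4 * p ^ 2)).fun_div
      (((hasDerivAt_pow 2 q).const_add (p ^ 2)).fun_pow 2) (pow_ne_zero 2 h)).congr_deriv ?_
    field_simp
    ring
  rw [hderiv.deriv_eq, hderiv₂.deriv]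

lemma hasDerivAt_sinTwoArg_left (p b : ℝ) (h : p ^ 2 + b ^ 2 ≠ 0) :
    HasDerivAt (sinTwoArg · b) (2 * b * (b ^ 2 - p ^ 2) / (p ^ 2 + b ^ 2) ^ 2) p := by
  refine ((((hasDerivAt_id' p).const_mul 2).mul_const b).fun_div
    ((hasDerivAt_pow 2 p).add_const (b ^ 2)) h).congr_deriv ?_
  field_simp
  ring

lemma deriv_deriv_sinTwoArg (p q : ℝ) (h : p ^ 2 + q ^ 2 ≠ 0) :
    deriv (fun b => deriv (sinTwoArg · b) p) q
      = (-2 * p ^ 4 + 12 * p ^ 2 * q ^ 2 - 2 * q ^ 4) / (p ^ 2 + q ^ 2) ^ 3 := by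
  have hderiv : (fun b => deriv (sinTwoArg · b) p)
      =ᶠ[𝓝 q] fun b => 2 * b * (b ^ 2 - p ^ 2) / (p ^ 2 + b ^ 2) ^ 2 :=
    (eventually_sq_add_sq_ne_zero h).mono fun b hb => (hasDerivAt_sinTwoArg_left p b hb).deriv
  have hderiv₂ : HasDerivAt (fun b => 2 * b * (b ^ 2 - p ^ 2) / (p ^ 2 + b ^ 2) ^ 2)
      ((-2 * p ^ 4 + 12 * p ^ 2 * q ^ 2 - 2 * q ^ 4) / (p ^ 2 + q ^ 2) ^ 3) q := by
    refine ((((hasDerivAt_id' q).const_mul 2).fun_mul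
      ((hasDerivAt_pow 2 q).sub_const (p ^ 2))).fun_div
      (((hasDerivAt_pow 2 q).const_add (p ^ 2)).fun_pow 2) (pow_ne_zero 2 h)).congr_deriv ?_
    field_simp
    ring
  rw [hderiv.deriv_eq, hderiv₂.deriv]

/-- Let `z = x − y ∈ ℝ² ∖ {0}` and `(α_{ij})` the entries of `2zzᵀ/‖z‖² − I`.
Away from the diagonal `x = y`, the double curl vanishes:
`∂²α₁₁/∂x²∂y² − ∂²α₁₂/∂x²∂y¹ − ∂²α₂₁/∂x¹∂y² + ∂²α₂₂/∂x¹∂y¹ = 0`,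
i.e. `d₁d₂α = 0` on `{x ≠ y}`. -/
theorem stmt16 (x y : ℝ × ℝ) (hxy : x ≠ y) :
    let α : Fin 2 → Fin 2 → ℝ × ℝ → ℝ × ℝ → ℝ := fun i j a b =>
      (if i = j then
          (if i = 0 then (a.1 - b.1) ^ 2 - (a.2 - b.2) ^ 2
            else (a.2 - b.2) ^ 2 - (a.1 - b.1) ^ 2)
        else 2 * (a.1 - b.1) * (a.2 - b.2))
        / ((a.1 - b.1) ^ 2 + (a.2 - b.2) ^ 2)
    deriv (fun s => deriv (fun u => α 0 0 (x.1, s) (y.1, u)) y.2) x.2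
      - deriv (fun s => deriv (fun u => α 0 1 (x.1, s) (u, y.2)) y.1) x.2
      - deriv (fun s => deriv (fun u => α 1 0 (s, x.2) (y.1, u)) y.2) x.1
      + deriv (fun s => deriv (fun u => α 1 1 (s, x.2) (u, y.2)) y.1) x.1 = 0 := by
  intro α
  have hz : (x.1 - y.1) ^ 2 + (x.2 - y.2) ^ 2 ≠ 0 := by
    rwa [sq, sq, Ne, mul_self_add_mul_self_eq_zero, sub_eq_zero, sub_eq_zero, ← Prod.ext_iff]
  have h00 : ∀ s u, α 0 0 (x.1, s) (y.1, u) = cosTwoArg (x.1 - y.1) (s - u) := fun _ _ => rfl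
  have h01 : ∀ s u, α 0 1 (x.1, s) (u, y.2) = sinTwoArg (x.1 - u) (s - y.2) := fun _ _ => rfl
  have h10 : ∀ s u, α 1 0 (s, x.2) (y.1, u) = sinTwoArg (x.2 - u) (s - y.1) := fun s u => by
    simp only [α, sinTwoArg, Fin.isValue, one_ne_zero, ↓reduceIte]; ring
  have h11 : ∀ s u, α 1 1 (s, x.2) (u, y.2) = cosTwoArg (x.2 - y.2) (s - u) := fun s u => by
    simp only [α, cosTwoArg, Fin.isValue, one_ne_zero, ↓reduceIte]; ring
  have hz' : (x.2 - y.2) ^ 2 + (x.1 - y.1) ^ 2 ≠ 0 := by rwa [add_comm]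
  simp only [h00, h01, h10, h11]
  rw [deriv_deriv_comp_sub, deriv_deriv_comp_sub, deriv_deriv_comp_sub_sub sinTwoArg,
    deriv_deriv_comp_sub_sub sinTwoArg, deriv_deriv_cosTwoArg _ _ hz, deriv_deriv_cosTwoArg _ _ hz',
    deriv_deriv_sinTwoArg _ _ hz, deriv_deriv_sinTwoArg _ _ hz', add_comm ((x.2 - y.2) ^ 2)]
  ring
end

section
/- For any two distinct points x, y on a circle C ⊂ ℝ² traversed counterclockwise with unit tangents t_x, t_y, the vector V(y,t_y,x) = 2⟨x−y,t_y⟩/|x−y|²·(x−y) − t_y equals t_x, the unit tangent to C at x. -/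
open Real

/-- For two distinct points `x = c + r(cos θ, sin θ)` and
`y = c + r(cos φ, sin φ)` on a counterclockwise circle `C ⊂ ℝ²`, with unit
tangents `t_x = (−sin θ, cos θ)` and `t_y = (−sin φ, cos φ)`, the Mayer field
vector `V(y,t_y,x) = 2⟨x−y,t_y⟩/‖x−y‖² · (x−y) − t_y` equals `t_x`. -/
theorem stmt18 (c : ℝ × ℝ) (r : ℝ) (hr : 0 < r) (θ φ : ℝ)
    (x y : ℝ × ℝ)
    (hx : x = (c.1 + r * cos θ, c.2 + r * sin θ))
    (hy : y = (c.1 + r * cos φ, c.2 + r * sin φ))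
    (hxy : x ≠ y) :
    let ty : ℝ × ℝ := (-sin φ, cos φ)
    let d : ℝ := (x.1 - y.1) * ty.1 + (x.2 - y.2) * ty.2
    let n : ℝ := (x.1 - y.1) ^ 2 + (x.2 - y.2) ^ 2
    ((2 * d / n) * (x.1 - y.1) - ty.1, (2 * d / n) * (x.2 - y.2) - ty.2)
      = ((-sin θ, cos θ) : ℝ × ℝ) := by
  intro ty d n
  have hne : x.1 - y.1 ≠ 0 ∨ x.2 - y.2 ≠ 0 := by
    by_contra h
    push_neg at h
    apply hxy
    have h1 : x.1 = y.1 := by linarith [h.1]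
    have h2 : x.2 = y.2 := by linarith [h.2]
    exact Prod.ext h1 h2
  have hn : n ≠ 0 := by
    rcases hne with h | h
    · have h2 : 0 < (x.1 - y.1) ^ 2 := by positivity
      have : 0 < n := by
        have : 0 ≤ (x.2 - y.2) ^ 2 := sq_nonneg _
        simp only [n]; linarith
      exact ne_of_gt this
    · have h2 : 0 < (x.2 - y.2) ^ 2 := by positivity
      have : 0 < n := by
        have : 0 ≤ (x.1 - y.1) ^ 2 := sq_nonneg _
        simp only [n]; linarith
      exact ne_of_gt this
  have hθ := sin_sq_add_cos_sq θ
  have hφ := sin_sq_add_cos_sq φ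
  have hr' : (r : ℝ) ≠ 0 := ne_of_gt hr
  refine Prod.ext ?_ ?_ <;> simp only <;>
    rw [div_mul_eq_mul_div, sub_eq_iff_eq_add, div_eq_iff hn] <;>
    simp only [ty, d, n] <;> subst hx hy <;> simp only
  · linear_combination (r ^ 2 * (sin θ - sin φ)) * hθ + (r ^ 2 * (sin φ - sin θ)) * hφ
  · linear_combination (r ^ 2 * (cos φ - cos θ)) * hθ + (r ^ 2 * (cos θ - cos φ)) * hφ
end
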